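/- For fixed natural numbers j ≤ k, the function f(u) = t(3^{k-j}·(3u+2) − 1), where t is the Thue–Morse word, is not eventually constant in u. -/

import Mathlib

open Fin.NatCast

/-- The Thue–Morse word: bit `n` is the parity of the number of 1s in the
binary expansion of `n`. -/
def tm (n : ℕ) : Fin 2 := ((Nat.digits 2 n).sum : Fin 2)

/-!
For odd `d` put `s = φ(d)`, so that `2 ^ s ≡ 1 [MOD d]`. The number `∑_{i<c} 2^(s i)` has
exactly `c` binary ones and is congruent to `c` modulo `d`, and multiplying it by `2 ^ (s N)`
changes neither fact while making it as large as we like. Taking `c = r + d` and `c = r + 2d`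
thus gives arbitrarily large members of the progression `d u + r` whose Thue–Morse values differ
by `d ≡ 1 (mod 2)`. The progression `3^(k-j) (3u + 2) - 1` is `d u + r` with `d = 3^(k-j+1)`.
-/

lemma tm_zero : tm 0 = 0 := by simp [tm]

lemma tm_one : tm 1 = 1 := by simp [tm]

lemma tm_add_two_pow_mul {n a : ℕ} (hn : n < 2 ^ a) (m : ℕ) :
    tm (n + 2 ^ a * m) = tm n + tm m := by
  rcases Nat.eq_zero_or_pos m with rfl | hm
  · simp [tm_zero]
  obtain ⟨k, rfl⟩ := Nat.exists_eq_add_of_le ((Nat.digits_length_le_iff one_lt_two n).mpr hn)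
  simp only [tm, ← Nat.digits_append_zeroes_append_digits one_lt_two hm, List.sum_append,
    List.sum_replicate, smul_zero, add_zero, Nat.cast_add]

lemma tm_two_pow_mul (a m : ℕ) : tm (2 ^ a * m) = tm m := by
  simpa [tm_zero] using tm_add_two_pow_mul (Nat.two_pow_pos a) m

def spacedRepunit (s c : ℕ) : ℕ := ∑ i ∈ Finset.range c, 2 ^ (s * i)

lemma spacedRepunit_succ (s c : ℕ) :
    spacedRepunit s (c + 1) = spacedRepunit s c + 2 ^ (s * c) := by
  simp [spacedRepunit, Finset.sum_range_succ]

lemma spacedRepunit_pos (s : ℕ) {c : ℕ} (hc : c ≠ 0) : 0 < spacedRepunit s c := by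
  obtain ⟨c, rfl⟩ := Nat.exists_eq_succ_of_ne_zero hc
  rw [spacedRepunit_succ]
  positivity

lemma spacedRepunit_lt {s : ℕ} (hs : s ≠ 0) (c : ℕ) : spacedRepunit s c < 2 ^ (s * c) := by
  induction c with
  | zero => simp [spacedRepunit]
  | succ c ih =>
    calc spacedRepunit s (c + 1) = spacedRepunit s c + 2 ^ (s * c) := spacedRepunit_succ s c
      _ < 2 ^ (s * c) + 2 ^ (s * c) := by omega
      _ = 2 ^ (s * c + 1) := by ring
      _ ≤ 2 ^ (s * (c + 1)) := Nat.pow_le_pow_right two_pos (by rw [mul_add_one]; omega)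

lemma tm_spacedRepunit {s : ℕ} (hs : s ≠ 0) (c : ℕ) : tm (spacedRepunit s c) = c := by
  induction c with
  | zero => simp [spacedRepunit, tm_zero]
  | succ c ih =>
    rw [spacedRepunit_succ, ← mul_one (2 ^ (s * c)), tm_add_two_pow_mul (spacedRepunit_lt hs c),
      ih, tm_one, Nat.cast_succ]

lemma spacedRepunit_modEq {s d : ℕ} (h : 2 ^ s ≡ 1 [MOD d]) (c : ℕ) :
    spacedRepunit s c ≡ c [MOD d] := by
  induction c with
  | zero => rfl
  | succ c ih =>
    have hpow : 2 ^ (s * c) ≡ 1 [MOD d] := by simpa [pow_mul] using h.pow c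
    rw [spacedRepunit_succ]
    exact ih.add hpow

lemma exists_ge_modEq_tm_eq {d : ℕ} (hd : Odd d) (N : ℕ) {c : ℕ} (hc : c ≠ 0) :
    ∃ n, N ≤ n ∧ n ≡ c [MOD d] ∧ tm n = c := by
  set s := d.totient
  have hs : 0 < s := Nat.totient_pos.mpr hd.pos
  have h2s : 2 ^ s ≡ 1 [MOD d] := Nat.ModEq.pow_totient (Nat.coprime_two_left.mpr hd)
  refine ⟨2 ^ (s * N) * spacedRepunit s c, ?_, ?_, ?_⟩
  · calc N ≤ 2 ^ N := Nat.lt_two_pow_self.le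
      _ ≤ 2 ^ (s * N) := Nat.pow_le_pow_right two_pos (Nat.le_mul_of_pos_left N hs)
      _ ≤ 2 ^ (s * N) * spacedRepunit s c := Nat.le_mul_of_pos_right _ (spacedRepunit_pos s hc)
  · simpa [pow_mul] using (h2s.pow N).mul (spacedRepunit_modEq h2s c)
  · rw [tm_two_pow_mul, tm_spacedRepunit hs.ne']

lemma natCast_fin_two_of_odd {d : ℕ} (hd : Odd d) : (d : Fin 2) = 1 := by
  obtain ⟨e, rfl⟩ := hd
  simp

theorem tm_progression_not_eventually_const {d : ℕ} (hd : Odd d) (r : ℕ) :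
    ¬ ∃ (c : Fin 2) (N : ℕ), ∀ u, N ≤ u → tm (d * u + r) = c := by
  rintro ⟨c, N, h⟩
  have hd0 : 0 < d := hd.pos
  have hval : ∀ e : ℕ, e ≠ 0 → e ≡ r [MOD d] → (e : Fin 2) = c := by
    intro e he her
    obtain ⟨n, hNn, hne, htm⟩ := exists_ge_modEq_tm_eq hd (d * N + r) he
    obtain ⟨u, rfl⟩ : ∃ u, n = d * u + r := by
      obtain ⟨u, hu⟩ := (Nat.modEq_iff_dvd' (by omega)).mp (hne.trans her).symm
      exact ⟨u, by omega⟩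
    rw [← htm, h u (Nat.le_of_mul_le_mul_left (by omega) hd0)]
  have h1 := hval (r + d) (by omega) Nat.add_modEq_right
  have h2 := hval (r + d + d) (by omega) (Nat.add_modEq_right.trans Nat.add_modEq_right)
  rw [Nat.cast_add, h1, natCast_fin_two_of_odd hd] at h2
  exact one_ne_zero (add_eq_left.mp h2)

theorem stmt_14_general (j k : ℕ) :
    ¬ ∃ (c : Fin 2) (N : ℕ), ∀ u, N ≤ u → tm (3 ^ (k - j) * (3 * u + 2) - 1) = c := by
  have hprog : ∀ u, 3 ^ (k - j) * (3 * u + 2) - 1 =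
      3 ^ (k - j + 1) * u + (2 * 3 ^ (k - j) - 1) := by
    intro u
    have hexpand : 3 ^ (k - j) * (3 * u + 2) = 3 ^ (k - j + 1) * u + 2 * 3 ^ (k - j) := by ring
    have hpos : 0 < 3 ^ (k - j) := by positivity
    omega
  simp only [hprog]
  exact tm_progression_not_eventually_const (Odd.pow (by decide)) _

theorem stmt_14 (j k : ℕ) (hjk : j ≤ k) :
    ¬ ∃ (c : Fin 2) (N : ℕ), ∀ u, N ≤ u → tm (3 ^ (k - j) * (3 * u + 2) - 1) = c :=
  stmt_14_general j k
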